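/- Let h : ℝ² → ℝ² be defined by h(y) = y/(1 + ‖y‖²)^{1/2}. Then the closure in ℝ² of the set h(ℝ × ℤ) = {h(t, j) : t ∈ ℝ, j ∈ ℤ} equals h(ℝ × ℤ) ∪ S¹, where S¹ = {y ∈ ℝ² : ‖y‖ = 1}. In particular, every point of the unit sphere is a limit of points h(n_j p_j, m_j q_j) with integer coordinates. -/

import Mathlib

/-!
`h` is the homeomorphism `OpenPartialHomeomorph.univUnitBall` of the plane onto the open unit
ball, so the image of the closed set `ℝ × ℤ` is relatively closed in the ball and its closure can
only add points of the unit circle. Conversely, for `‖x‖ = 1` the points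
`u c = (c x₀, ⌊c x₁⌋) ∈ ℝ × ℤ` satisfy `c⁻¹ • u c → x` as `c → ∞`, and
`h (u c) = (√(c⁻² + ‖c⁻¹ • u c‖²))⁻¹ • (c⁻¹ • u c) → ‖x‖⁻¹ • x = x`.
-/

open Filter Topology Metric Set OpenPartialHomeomorph

theorem tendsto_floor_mul_div_atTop {R : Type*} [TopologicalSpace R] [Field R] [LinearOrder R]
    [IsStrictOrderedRing R] [OrderTopology R] [FloorRing R] (a : R) :
    Tendsto (fun x ↦ (⌊a * x⌋ : R) / x) atTop (𝓝 a) := by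
  have hlow : Tendsto (fun x : R ↦ a - x⁻¹) atTop (𝓝 a) := by
    simpa using tendsto_const_nhds.sub (tendsto_inv_atTop_zero (𝕜 := R))
  refine tendsto_of_tendsto_of_tendsto_of_le_of_le' hlow tendsto_const_nhds ?_ ?_
  · filter_upwards [eventually_gt_atTop 0] with x hx
    rw [le_div_iff₀ hx, sub_mul, inv_mul_cancel₀ hx.ne']
    linarith [Int.sub_one_lt_floor (a * x)]
  · filter_upwards [eventually_gt_atTop 0] with x hx
    exact (div_le_iff₀ hx).2 (Int.floor_le _)

section UnitBall

variable {E : Type*} [SeminormedAddCommGroup E] [NormedSpace ℝ E]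

theorem univUnitBall_apply_eq_rpow_smul (x : E) :
    univUnitBall x = (1 + ‖x‖ ^ 2) ^ (-(1 / 2) : ℝ) • x := by
  rw [univUnitBall_apply, Real.sqrt_eq_rpow, ← Real.rpow_neg (by positivity)]

theorem closure_image_univUnitBall_subset {A : Set E} (hA : IsClosed A) :
    closure (univUnitBall '' A) ⊆ univUnitBall '' A ∪ sphere 0 1 := by
  intro x hx
  have hx_le : ‖x‖ ≤ 1 := by
    have : closure (univUnitBall '' A) ⊆ closedBall 0 1 :=
      closure_minimal (image_subset_iff.2 fun y _ ↦
        ball_subset_closedBall (univUnitBall.map_source (mem_univ y))) isClosed_closedBall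
    simpa using this hx
  rcases hx_le.eq_or_lt with hx_eq | hx_lt
  · exact Or.inr (mem_sphere_zero_iff_norm.2 hx_eq)
  have hx_target : x ∈ univUnitBall.target := mem_ball_zero_iff.2 hx_lt
  refine Or.inl ⟨univUnitBall.symm x, ?_, univUnitBall.right_inv hx_target⟩
  have := mem_closure_image (univUnitBall.continuousAt_symm hx_target) hx
  rwa [(univUnitBall.leftInvOn.mono (subset_univ A)).image_image, hA.closure_eq] at this

theorem tendsto_univUnitBall_of_tendsto_inv_smul {α : Type*} {l : Filter α} {c : α → ℝ}
    {u : α → E} {x : E} (hc : Tendsto c l atTop) (hu : Tendsto (fun a ↦ (c a)⁻¹ • u a) l (𝓝 x))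
    (hx : ‖x‖ ≠ 0) : Tendsto (fun a ↦ univUnitBall (u a)) l (𝓝 (‖x‖⁻¹ • x)) := by
  have hlim : Tendsto (fun a ↦ (√((c a)⁻¹ ^ 2 + ‖(c a)⁻¹ • u a‖ ^ 2))⁻¹ • ((c a)⁻¹ • u a)) l
      (𝓝 ((√(0 ^ 2 + ‖x‖ ^ 2))⁻¹ • x)) :=
    ((((hc.inv_tendsto_atTop).pow 2).add (hu.norm.pow 2)).sqrt.inv₀ (by simpa using hx)).smul hu
  rw [zero_pow two_ne_zero, zero_add, Real.sqrt_sq (norm_nonneg x)] at hlim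
  refine hlim.congr' ?_
  filter_upwards [hc.eventually_gt_atTop 0] with a ha
  have hsq : (c a)⁻¹ ^ 2 + ‖(c a)⁻¹ • u a‖ ^ 2 = (c a)⁻¹ ^ 2 * (1 + ‖u a‖ ^ 2) := by
    rw [norm_smul, Real.norm_of_nonneg (inv_nonneg.2 ha.le)]; ring
  rw [univUnitBall_apply, hsq, Real.sqrt_mul (sq_nonneg _), Real.sqrt_sq (inv_nonneg.2 ha.le),
    smul_smul, mul_inv, inv_inv]
  congr 1
  field_simp

end UnitBall

def horizontalLines : Set (EuclideanSpace ℝ (Fin 2)) :=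
  {y | ∃ (t : ℝ) (j : ℤ), y = ![t, (j : ℝ)]}

theorem horizontalLines_eq_preimage :
    horizontalLines = (fun y : EuclideanSpace ℝ (Fin 2) ↦ y 1) ⁻¹' range ((↑) : ℤ → ℝ) := by
  ext y
  constructor
  · rintro ⟨t, j, hy⟩
    exact ⟨j, by simp [hy]⟩
  · rintro ⟨j, hj⟩
    refine ⟨y 0, j, ?_⟩
    ext i
    fin_cases i <;> simp [hj]

theorem isClosed_horizontalLines : IsClosed horizontalLines := by
  rw [horizontalLines_eq_preimage]
  exact Int.isClosedEmbedding_coe_real.isClosed_range.preimage (by fun_prop)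

theorem sphere_subset_closure_univUnitBall_image_horizontalLines :
    sphere 0 1 ⊆ closure (univUnitBall '' horizontalLines) := by
  intro x hx
  have hx_norm : ‖x‖ = 1 := mem_sphere_zero_iff_norm.1 hx
  let u : ℝ → EuclideanSpace ℝ (Fin 2) := fun c ↦ WithLp.toLp 2 ![x 0 * c, ⌊x 1 * c⌋]
  have hu : Tendsto (fun c ↦ c⁻¹ • u c) atTop (𝓝 x) := by
    have hline : Continuous fun s : ℝ ↦ (WithLp.toLp 2 ![x 0, s] : EuclideanSpace ℝ (Fin 2)) := by
      fun_prop
    have := (hline.tendsto (x 1)).comp (tendsto_floor_mul_div_atTop (x 1))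
    have hx_eq : (WithLp.toLp 2 ![x 0, x 1] : EuclideanSpace ℝ (Fin 2)) = x := by
      ext i; fin_cases i <;> rfl
    rw [hx_eq] at this
    refine this.congr' ?_
    filter_upwards [eventually_ne_atTop 0] with c hc
    ext i
    fin_cases i <;> simp [u, field]
  have hlim := tendsto_univUnitBall_of_tendsto_inv_smul tendsto_id hu (by simp [hx_norm])
  rw [hx_norm, inv_one, one_smul] at hlim
  exact mem_closure_of_tendsto hlim
    (Eventually.of_forall fun c ↦ mem_image_of_mem _ ⟨x 0 * c, ⌊x 1 * c⌋, rfl⟩)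

/-- With `h(y) = y / (1 + ‖y‖²)^{1/2}`, the closure in `ℝ²` of `h(ℝ × ℤ)` is
`h(ℝ × ℤ) ∪ S¹` where `S¹` is the unit sphere. -/
theorem stmt3 :
    letI h : EuclideanSpace ℝ (Fin 2) → EuclideanSpace ℝ (Fin 2) :=
      fun y => ((1 + ‖y‖ ^ 2) ^ (-(1 / 2) : ℝ)) • y
    closure (h '' {y : EuclideanSpace ℝ (Fin 2) | ∃ (t : ℝ) (j : ℤ), y = ![t, (j : ℝ)]})
      = h '' {y : EuclideanSpace ℝ (Fin 2) | ∃ (t : ℝ) (j : ℤ), y = ![t, (j : ℝ)]}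
        ∪ Metric.sphere (0 : EuclideanSpace ℝ (Fin 2)) 1 := by
  have h_eq : (fun y : EuclideanSpace ℝ (Fin 2) ↦ ((1 + ‖y‖ ^ 2) ^ (-(1 / 2) : ℝ)) • y) =
      univUnitBall := funext fun y ↦ (univUnitBall_apply_eq_rpow_smul y).symm
  rw [h_eq]
  exact (closure_image_univUnitBall_subset isClosed_horizontalLines).antisymm
    (union_subset subset_closure sphere_subset_closure_univUnitBall_image_horizontalLines)
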